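/- arXiv:2307.03348 — 3 statements merged into one kernel-verified Lean document; each statement's English description precedes it below -/
import Mathlib

section
/- Let L be the weighted Laplacian matrix of a finite connected graph X with vertex weights c(v) and edge weights c(e) (each c(e) dividing the weights of its endpoints). Then the adjugate of L equals adj(L) = C_V^{-1} J ξ, where J is the all-ones matrix, C_V is the diagonal matrix of vertex weights, and ξ = (∏_{v∈V(X)} c(v)) · Σ_{T spanning tree of X} ∏_{e∈E(T)} c(e)^{-1}. -/
open scoped Classical

open Finset

/-- Connectivity of a multigraph presented by endpoint maps `s t : E → V`. -/
def GraphConnected {V E : Type*} (s t : E → V) : Prop :=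
  ∀ u v : V, Relation.ReflTransGen
    (fun a b => ∃ e, (s e = a ∧ t e = b) ∨ (s e = b ∧ t e = a)) u v

/-- Weighted (graph of groups) Laplacian matrix: the `(u,v)` entry is the coefficient
of `u` in `L(v)`, where firing `v` sends `c(v)/c(e)` chips along each edge `e` at `v`.
Loops contribute zero automatically. -/
def gogLap {V E : Type*} [Fintype E] [DecidableEq V]
    (s t : E → V) (cV : V → ℕ) (cE : E → ℕ) : Matrix V V ℤ :=
  Matrix.of fun u v => ∑ e : E, ((cV v / cE e : ℕ) : ℤ) *
    (((if s e = v then (1 : ℤ) else 0) - (if t e = v then 1 else 0)) *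
     ((if s e = u then (1 : ℤ) else 0) - (if t e = u then 1 else 0)))

/-- Degree (sum of coefficients) of a divisor, as a linear map. -/
def degHom (V : Type*) [Fintype V] : (V → ℤ) →ₗ[ℤ] ℤ where
  toFun d := ∑ v, d v
  map_add' x y := Finset.sum_add_distrib
  map_smul' c x := by simp [Finset.mul_sum]

/-- The Jacobian of the weighted graph: degree-zero divisors modulo the image of the
weighted Laplacian. -/
abbrev gogJac {V E : Type*} [Fintype V] [Fintype E] [DecidableEq V]
    (s t : E → V) (cV : V → ℕ) (cE : E → ℕ) :=
  LinearMap.ker (degHom V) ⧸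
    Submodule.comap (LinearMap.ker (degHom V)).subtype
      (LinearMap.range (gogLap s t cV cE).mulVecLin)

/-- A spanning tree of the multigraph, given as a set of edges: it connects all
vertices and has `|V| - 1` edges. -/
def IsSpanningTree {V E : Type*} [Fintype V] (s t : E → V) (F : Finset E) : Prop :=
  (∀ u v : V, Relation.ReflTransGen
      (fun a b => ∃ e ∈ F, (s e = a ∧ t e = b) ∨ (s e = b ∧ t e = a)) u v) ∧
  F.card + 1 = Fintype.card V

/-!
Over a field the weighted Laplacian factors as `L = (B W Bᵀ) C_V`, where `B` is the signed
incidence matrix and `W = diag (c(e)⁻¹)`; the divisibility hypotheses make the natural-number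
quotients `c(v)/c(e)` exact. Hence `adj L = adj C_V · adj (B W Bᵀ)` and `adj C_V = (∏ c(v)) C_V⁻¹`.
For positive weights and a connected graph the kernel of `B W Bᵀ` consists of the constants
(its quadratic form is `∑ₑ w(e) (x(s e) - x(t e))²`); the columns of its adjugate lie in that
kernel, so every entry equals a principal minor. By Cauchy–Binet that minor is
`∑_F (∏_{e ∈ F} c(e)⁻¹) (det B_F)²` over edge sets `F` of size `|V| - 1`, with `B_F` the incidence
matrix of `F` with one vertex row removed: `det B_F = ±1` when `F` is a spanning tree (order the
vertices by distance to the removed one, and pair each with the edge to its parent), and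
`det B_F = 0` otherwise (the indicator of a component avoiding the removed vertex lies in its
left kernel).
-/

open Matrix Equiv

theorem Finset.sum_filter_image_eq_sum_perm {m n M : Type*} [Fintype m] [DecidableEq m]
    [Fintype n] [DecidableEq n] [AddCommMonoid M] (T : (m → n) → M) (F : Finset n) (g : m ≃ F) :
    ∑ f ∈ univ.filter (fun f : m → n => univ.image f = F), T f =
      ∑ σ : Perm m, T (fun i => g (σ i)) := by
  symm
  refine Finset.sum_nbij (fun σ i => (g (σ i) : n)) ?_ ?_ ?_ (fun _ _ => rfl)
  · intro σ _
    simp only [mem_filter, mem_univ, true_and]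
    ext x
    simp only [mem_image, mem_univ, true_and]
    refine ⟨?_, fun hx => ⟨σ.symm (g.symm ⟨x, hx⟩), by simp⟩⟩
    rintro ⟨i, rfl⟩
    exact (g (σ i)).2
  · intro σ _ τ _ h
    ext i
    simpa using congrFun h i
  · intro f hf
    simp only [coe_filter, mem_univ, true_and, Set.mem_ofPred_eq] at hf
    have hmem (i : m) : f i ∈ F := hf ▸ mem_image_of_mem f (mem_univ i)
    have hcard : (univ.image f).card = (univ : Finset m).card := by
      rw [hf, card_univ, Fintype.card_congr g, Fintype.card_coe]
    have hinj : Function.Injective f := by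
      simpa [Set.injOn_univ] using Finset.card_image_iff.mp hcard
    let σ : Perm m := Equiv.ofBijective (fun i => g.symm ⟨f i, hmem i⟩)
      (Finite.injective_iff_bijective.mp fun i j h => hinj (by simpa using h))
    exact ⟨σ, mem_coe.mpr (mem_univ σ), funext fun i => by simp [σ]⟩

namespace Matrix

variable {R : Type*} [CommRing R] {m n : Type*}

theorem det_mul_eq_sum_prod_mul_det_submatrix [Fintype m] [DecidableEq m] [Fintype n]
    (A : Matrix m n R) (B : Matrix n m R) :
    (A * B).det = ∑ f : m → n, (∏ i, B (f i) i) * (A.submatrix id f).det := by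
  have hrows : (A * B)ᵀ = fun i => ∑ k, B k i • Aᵀ k := by
    ext i j
    simp [mul_apply, Finset.sum_apply, mul_comm]
  rw [← det_transpose, hrows]
  change detRowAlternating.toMultilinearMap _ = _
  rw [MultilinearMap.map_sum]
  refine Finset.sum_congr rfl fun f _ => ?_
  rw [MultilinearMap.map_smul_univ, smul_eq_mul, ← det_transpose]
  rfl

theorem sum_perm_prod_mul_det_submatrix_comp [Fintype m] [DecidableEq m]
    (A : Matrix m n R) (B : Matrix n m R) (g : m → n) :
    ∑ σ : Perm m, (∏ i, B (g (σ i)) i) * (A.submatrix id (g ∘ σ)).det =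
      (A.submatrix id g).det * (B.submatrix g id).det := by
  have hperm (σ : Perm m) :
      (A.submatrix id (g ∘ σ)).det = Perm.sign σ * (A.submatrix id g).det :=
    det_permute' σ (A.submatrix id g)
  simp_rw [hperm, det_apply' (B.submatrix g id), Finset.mul_sum]
  refine Finset.sum_congr rfl fun σ _ => ?_
  simp only [submatrix_apply, id_eq]
  ring

/-- Cauchy–Binet. Specifying `φ F` through every enumeration `g` of `F` avoids choosing one;
the product of the two minors does not depend on that choice. -/
theorem det_mul_eq_sum_finset [Fintype m] [DecidableEq m] [Fintype n] [DecidableEq n]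
    (A : Matrix m n R) (B : Matrix n m R) (φ : Finset n → R)
    (hφ : ∀ (F : Finset n) (g : m ≃ F),
      φ F = (A.submatrix id (fun i => (g i : n))).det * (B.submatrix (fun i => (g i : n)) id).det)
    (hφ₀ : ∀ F : Finset n, F.card ≠ Fintype.card m → φ F = 0) :
    (A * B).det = ∑ F, φ F := by
  rw [det_mul_eq_sum_prod_mul_det_submatrix,
    ← Finset.sum_fiberwise univ (fun f : m → n => univ.image f)]
  refine Finset.sum_congr rfl fun F _ => ?_
  by_cases hF : F.card = Fintype.card m
  · obtain g : m ≃ F := Fintype.equivOfCardEq (by rw [Fintype.card_coe, hF])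
    rw [sum_filter_image_eq_sum_perm _ F g, hφ F g, ← sum_perm_prod_mul_det_submatrix_comp]
    rfl
  · rw [hφ₀ F hF]
    refine Finset.sum_eq_zero fun f hf => ?_
    have hnotinj : ¬ Function.Injective f := fun hinj => hF <| by
      rw [← (mem_filter.mp hf).2, card_image_of_injective _ hinj, card_univ]
    obtain ⟨i, j, hij, hne⟩ : ∃ i j, f i = f j ∧ i ≠ j := by
      simpa [Function.Injective] using hnotinj
    rw [det_zero_of_column_eq hne fun k => by simp [hij], mul_zero]

theorem det_eq_prod_diag_of_le_rank [Fintype m] [DecidableEq m] {M : Matrix m m R} (d : m → ℕ)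
    (hM : ∀ i j, i ≠ j → d j ≤ d i → M i j = 0) : M.det = ∏ i, M i i := by
  let : LinearOrder m := LinearOrder.lift' (fun i => toLex (d i, Fintype.equivFin m i))
    fun i j h => (Fintype.equivFin m).injective (by simpa using congrArg (fun p => (ofLex p).2) h)
  refine det_of_isUpperTriangular fun i j hji => hM i j (ne_of_gt hji) ?_
  change toLex (d j, Fintype.equivFin m j) < toLex (d i, Fintype.equivFin m i) at hji
  exact (Prod.Lex.toLex_lt_toLex.mp hji).elim le_of_lt fun h => h.1.le

theorem adjugate_apply_self [Fintype n] [DecidableEq n] (A : Matrix n n R) (i : n) :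
    A.adjugate i i = (A.submatrix (Subtype.val : {j // j ≠ i} → n) Subtype.val).det := by
  let e : {j // j ≠ i} ⊕ {j // ¬j ≠ i} ≃ n := Equiv.sumCompl _
  have : Unique {j : n // ¬j ≠ i} :=
    ⟨⟨⟨i, not_not.mpr rfl⟩⟩, fun j => Subtype.ext (not_not.mp j.2)⟩
  have hblock : (A.updateRow i (Pi.single i 1)).submatrix e e =
      fromBlocks (A.submatrix Subtype.val Subtype.val) (of fun j _ => A j i) 0 1 := by
    ext (j | j) (k | k)
    · simp [e, updateRow_ne j.2]
    · simp [e, updateRow_ne j.2, not_not.mp k.2]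
    · simp [e, not_not.mp j.2, k.2]
    · simp [e, not_not.mp k.2, Subsingleton.elim j k]
  rw [adjugate_apply, ← det_submatrix_equiv_self e, hblock, det_fromBlocks_zero₂₁, det_one,
    mul_one]

end Matrix

theorem Relation.exists_rank_of_forall_reflTransGen {α : Type*} {r : α → α → Prop} {a : α}
    (h : ∀ x, ReflTransGen r x a) : ∃ d : α → ℕ, ∀ x, x ≠ a → ∃ y, r x y ∧ d y < d x := by
  -- `d x` will be the length of a shortest `r`-path from `x` to `a`
  have hpath (x : α) : ∃ n, ∃ p : ℕ → α, p 0 = x ∧ p n = a ∧ ∀ k < n, r (p k) (p (k + 1)) := by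
    induction h x using ReflTransGen.head_induction_on with
    | refl => exact ⟨0, fun _ => a, rfl, rfl, by simp⟩
    | @head x y hxy _ ih =>
      obtain ⟨n, p, hp0, hpn, hp⟩ := ih
      refine ⟨n + 1, fun k => if k = 0 then x else p (k - 1), by simp, by simpa using hpn, ?_⟩
      rintro (_ | k) hk
      · simpa [hp0] using hxy
      · simpa using hp k (by omega)
  refine ⟨fun x => Nat.find (hpath x), fun x hx => ?_⟩
  obtain ⟨p, hp0, hpn, hp⟩ := Nat.find_spec (hpath x)
  obtain ⟨n, hn⟩ : ∃ n, Nat.find (hpath x) = n + 1 :=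
    Nat.exists_eq_add_one.mpr (Nat.pos_of_ne_zero fun h0 => hx (hp0 ▸ h0 ▸ hpn))
  refine ⟨p 1, hp0 ▸ hp 0 (by omega), ?_⟩
  simp only [hn]
  exact Nat.lt_succ_of_le <| Nat.find_min' _ ⟨fun k => p (k + 1), rfl, by rw [← hpn, hn],
    fun k hk => hp (k + 1) (by omega)⟩

namespace Multigraph

open Relation

variable {R : Type*} [CommRing R] {V E : Type*} [DecidableEq V]

def incMatrix (R : Type*) [CommRing R] (s t : E → V) : Matrix V E R :=
  of fun u e => (if s e = u then 1 else 0) - (if t e = u then 1 else 0)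

def laplacian [Fintype E] [DecidableEq E] (s t : E → V) (w : E → R) : Matrix V V R :=
  incMatrix R s t * diagonal w * (incMatrix R s t)ᵀ

def Adj (s t : E → V) (F : Finset E) (a b : V) : Prop :=
  ∃ e ∈ F, (s e = a ∧ t e = b) ∨ (s e = b ∧ t e = a)

instance (s t : E → V) (F : Finset E) : Std.Symm (Adj s t F) :=
  ⟨fun _ _ ⟨e, he, h⟩ => ⟨e, he, h.symm⟩⟩

theorem vecMul_incMatrix_apply [Fintype V] (s t : E → V) (x : V → R) (e : E) :
    (x ᵥ* incMatrix R s t) e = x (s e) - x (t e) := by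
  simp [vecMul, dotProduct, incMatrix, mul_sub, Finset.sum_sub_distrib]

theorem det_incMatrix_submatrix_eq_zero_of_not_connected [Fintype V] {s t : E → V} {F : Finset E}
    (hF : ¬ ∀ u v, ReflTransGen (Adj s t F) u v) (v₀ : V) (g : {v // v ≠ v₀} → E)
    (hg : ∀ i, g i ∈ F) : ((incMatrix R s t).submatrix Subtype.val g).det = 0 := by
  obtain ⟨x₀, hx₀⟩ : ∃ x₀, ¬ ReflTransGen (Adj s t F) x₀ v₀ := by
    by_contra! h
    exact hF fun u v => (h u).trans (Std.Symm.symm _ _ (h v))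
  -- the indicator of the component of `x₀`, which avoids `v₀`, is orthogonal to every column
  let y : V → R := fun u => if ReflTransGen (Adj s t F) u x₀ then 1 else 0
  have hy₀ : y v₀ = 0 := if_neg fun h => hx₀ (Std.Symm.symm _ _ h)
  have hcol (e : E) (he : e ∈ F) : y (s e) = y (t e) := by
    have hst : Adj s t F (s e) (t e) := ⟨e, he, Or.inl ⟨rfl, rfl⟩⟩
    have hiff : ReflTransGen (Adj s t F) (s e) x₀ ↔ ReflTransGen (Adj s t F) (t e) x₀ :=
      ⟨.head (Std.Symm.symm _ _ hst), .head hst⟩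
    simp only [y, hiff]
  rw [← det_transpose]
  refine det_eq_zero_of_mulVec_eq_zero_of_mem_nonZeroDivisors (v := fun i : {v // v ≠ v₀} => y i)
    ?_ (i := ⟨x₀, fun h => hx₀ (h ▸ .refl)⟩) (by simp only [y, if_pos ReflTransGen.refl, one_mem])
  funext j
  have := vecMul_incMatrix_apply s t y (g j)
  rw [hcol _ (hg j), sub_self, vecMul, dotProduct, Fintype.sum_eq_add_sum_subtype_ne _ v₀, hy₀,
    zero_mul, zero_add] at this
  simpa [mulVec, dotProduct, mul_comm] using this

theorem det_incMatrix_submatrix_sq_eq_one_of_connected [Fintype V] {s t : E → V} {F : Finset E}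
    (v₀ : V)
    (hF : ∀ u, ReflTransGen (Adj s t F) u v₀) (g : {v // v ≠ v₀} ≃ F) :
    ((incMatrix R s t).submatrix Subtype.val (fun i => (g i : E))).det ^ 2 = 1 := by
  obtain ⟨d, hd⟩ := exists_rank_of_forall_reflTransGen hF
  choose par hpar hlt using fun i : {v // v ≠ v₀} => hd i i.2
  choose p hpF hp using hpar
  have hself (j : {v // v ≠ v₀}) : s (p j) = j ∨ t (p j) = j := by
    rcases hp j with ⟨h, -⟩ | ⟨-, h⟩ <;> simp [h]
  have hends (j : {v // v ≠ v₀}) (u : V) : s (p j) = u ∨ t (p j) = u → u = j ∨ u = par j := by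
    rcases hp j with ⟨h₁, h₂⟩ | ⟨h₁, h₂⟩ <;> rw [h₁, h₂] <;> tauto
  have hinj : Function.Injective p := fun i j hij => by
    by_contra hne
    have hi := (hends j i (hij ▸ hself i)).resolve_left (Subtype.coe_ne_coe.mpr hne)
    have hj := (hends i j (hij ▸ hself j)).resolve_left (Subtype.coe_ne_coe.mpr (Ne.symm hne))
    have := hlt i
    have := hlt j
    rw [← hi, ← hj] at *
    omega
  let P : Matrix {v // v ≠ v₀} {v // v ≠ v₀} R := of fun i j => incMatrix R s t i (p j)
  -- `p j` joins `j` to a vertex of smaller rank, so ordering by rank makes `P` triangular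
  have hPdet : P.det = ∏ j, P j j :=
    det_eq_prod_diag_of_le_rank (fun i => d i) fun i j hij hle => by
    have hi : ¬ (s (p j) = i ∨ t (p j) = i) := fun h => by
      rcases hends j i h with h | h
      · exact hij (Subtype.ext h)
      · exact absurd (h ▸ hlt j) (not_lt.mpr hle)
    simp only [not_or] at hi
    simp [P, incMatrix, hi.1, hi.2]
  have hPdiag (j : {v // v ≠ v₀}) : P j j ^ 2 = 1 := by
    have hne : par j ≠ j := fun h => by simpa [h] using hlt j
    rcases hp j with ⟨h₁, h₂⟩ | ⟨h₁, h₂⟩ <;> simp [P, incMatrix, h₁, h₂, hne]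
  let p' : {v // v ≠ v₀} ≃ F := Equiv.ofBijective (fun i => ⟨p i, hpF i⟩)
    ((Fintype.bijective_iff_injective_and_card _).mpr
      ⟨fun i j h => hinj (congrArg Subtype.val h), Fintype.card_congr g⟩)
  have hperm : (incMatrix R s t).submatrix Subtype.val (fun i => (g i : E)) =
      P.submatrix id (g.trans p'.symm) := by
    ext i j
    have hpj : p (p'.symm (g j)) = g j := congrArg Subtype.val (p'.apply_symm_apply (g j))
    simp only [submatrix_apply, P, of_apply, id, Equiv.trans_apply, hpj]
  rw [hperm, det_permute', hPdet, mul_pow, ← Finset.prod_pow,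
    Finset.prod_eq_one fun j _ => hPdiag j, mul_one]
  rcases Int.units_eq_one_or (Perm.sign (g.trans p'.symm)) with h | h <;> simp [h]

theorem det_submatrix_laplacian [Fintype V] [Fintype E] [DecidableEq E] (s t : E → V)
    (w : E → R) (v₀ : V) :
    ((laplacian s t w).submatrix (Subtype.val : {v // v ≠ v₀} → V) Subtype.val).det =
      ∑ F ∈ Finset.univ.filter (IsSpanningTree s t), ∏ e ∈ F, w e := by
  have hcard : Fintype.card {v // v ≠ v₀} + 1 = Fintype.card V := by
    simp only [Fintype.card_subtype_compl, Fintype.card_unique]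
    have := Fintype.card_pos_iff.mpr ⟨v₀⟩
    omega
  let B := (incMatrix R s t).submatrix (Subtype.val : {v // v ≠ v₀} → V) id
  have hL : (laplacian s t w).submatrix Subtype.val Subtype.val = B * diagonal w * Bᵀ := by
    ext i j
    simp [laplacian, B, mul_apply]
  rw [hL, det_mul_eq_sum_finset _ _ (fun F => if IsSpanningTree s t F then ∏ e ∈ F, w e else 0),
    Finset.sum_filter]
  · intro F g
    have hw : ((B * diagonal w).submatrix id fun i => (g i : E)) =
        (incMatrix R s t).submatrix Subtype.val (fun i => (g i : E)) *
          diagonal fun i => w (g i) := by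
      ext i j
      simp [B]
    have hBt : (Bᵀ.submatrix (fun i => (g i : E)) id) =
        ((incMatrix R s t).submatrix Subtype.val (fun i => (g i : E)))ᵀ := rfl
    rw [hw, hBt, det_mul, det_diagonal, det_transpose, Equiv.prod_comp g fun e : F => w e,
      Finset.prod_coe_sort F]
    split_ifs with h
    · rw [mul_right_comm, ← sq,
        det_incMatrix_submatrix_sq_eq_one_of_connected v₀ (fun u => h.1 u v₀) g, one_mul]
    · have hconn : ¬ ∀ u v, ReflTransGen (Adj s t F) u v := fun hconn =>
        h ⟨hconn, by rw [← hcard, ← Fintype.card_coe F, Fintype.card_congr g]⟩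
      rw [det_incMatrix_submatrix_eq_zero_of_not_connected hconn v₀ _ fun i => (g i).2, zero_mul,
        zero_mul]
  · intro F hF
    exact if_neg fun h => hF (by have := h.2; omega)

section OrderedField

variable {K : Type*} [Field K] [LinearOrder K] [IsStrictOrderedRing K]

theorem eq_of_laplacian_mulVec_eq_zero [Fintype V] [Fintype E] [DecidableEq E] {s t : E → V}
    {w : E → K} (hw : ∀ e, 0 < w e) (hconn : GraphConnected s t) {x : V → K}
    (hx : laplacian s t w *ᵥ x = 0) (u v : V) : x u = x v := by
  have hquad : x ⬝ᵥ (laplacian s t w *ᵥ x) = ∑ e, w e * (x (s e) - x (t e)) ^ 2 := by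
    rw [laplacian, ← mulVec_mulVec, ← mulVec_mulVec, dotProduct_mulVec, mulVec_transpose]
    simp only [dotProduct, mulVec_diagonal, vecMul_incMatrix_apply]
    exact Finset.sum_congr rfl fun e _ => by ring
  have hedge (e : E) : x (s e) = x (t e) := by
    rw [hx, dotProduct_zero, eq_comm, Finset.sum_eq_zero_iff_of_nonneg
      fun e _ => mul_nonneg (hw e).le (sq_nonneg _)] at hquad
    have := hquad e (Finset.mem_univ e)
    rw [mul_eq_zero, or_iff_right (hw e).ne', sq_eq_zero_iff, sub_eq_zero] at this
    exact this
  induction hconn u v with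
  | refl => rfl
  | tail _ hab ih =>
    obtain ⟨e, ⟨hs, ht⟩ | ⟨hs, ht⟩⟩ := hab
    · rw [ih, ← hs, ← ht, hedge]
    · rw [ih, ← hs, ← ht, hedge]

theorem adjugate_laplacian [Fintype V] [Fintype E] [DecidableEq E] {s t : E → V}
    {w : E → K} (hw : ∀ e, 0 < w e) (hconn : GraphConnected s t) :
    (laplacian s t w).adjugate =
      of fun _ _ => ∑ F ∈ Finset.univ.filter (IsSpanningTree s t), ∏ e ∈ F, w e := by
  ext u v
  have hconst : laplacian s t w *ᵥ 1 = 0 := by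
    have : (1 : V → K) ᵥ* incMatrix K s t = 0 := funext fun e => by simp [vecMul_incMatrix_apply]
    rw [laplacian, ← mulVec_mulVec, mulVec_transpose, this, mulVec_zero]
  have hdet : (laplacian s t w).det = 0 :=
    exists_mulVec_eq_zero_iff.mp ⟨_, fun h => one_ne_zero (congrFun h u), hconst⟩
  have hcol : laplacian s t w *ᵥ (fun u => (laplacian s t w).adjugate u v) = 0 := by
    funext i
    simpa [hdet, mul_apply, mulVec, dotProduct] using
      congrFun (congrFun (mul_adjugate (laplacian s t w)) i) v
  rw [eq_of_laplacian_mulVec_eq_zero hw hconn hcol u v, adjugate_apply_self,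
    det_submatrix_laplacian, of_apply]

end OrderedField

theorem gogLap_map_intCast_eq_laplacian_mul_diagonal [Fintype V] [Fintype E] [DecidableEq E]
    {K : Type*} [Field K] [CharZero K] {s t : E → V} {cV : V → ℕ} {cE : E → ℕ}
    (hds : ∀ e, cE e ∣ cV (s e)) (hdt : ∀ e, cE e ∣ cV (t e)) :
    (gogLap s t cV cE).map (Int.cast : ℤ → K) =
      laplacian s t (fun e => (cE e : K)⁻¹) * diagonal fun v => (cV v : K) := by
  ext u v
  rw [Matrix.map_apply, mul_diagonal, laplacian, mul_apply, gogLap, of_apply, Int.cast_sum,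
    Finset.sum_mul]
  refine Finset.sum_congr rfl fun e _ => ?_
  rw [mul_diagonal, transpose_apply]
  by_cases hv : s e = v ∨ t e = v
  · rw [Int.cast_mul, Int.cast_natCast, Nat.cast_div_charZero (hv.elim (· ▸ hds e) (· ▸ hdt e))]
    simp only [incMatrix, of_apply]
    push_cast
    ring
  · rw [not_or] at hv
    simp [incMatrix, hv.1, hv.2]

end Multigraph

/-- the adjugate of the weighted Laplacian equals `C_V⁻¹ · J · ξ`, where `J`
is the all-ones matrix and `ξ = (∏_v c(v)) · Σ_{spanning trees T} ∏_{e ∈ T} c(e)⁻¹`. -/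
theorem stmt2 {V E : Type*} [Fintype V] [Fintype E] [DecidableEq V] [DecidableEq E]
    (s t : E → V) (cV : V → ℕ) (cE : E → ℕ)
    (hcV : ∀ v, 0 < cV v) (hcE : ∀ e, 0 < cE e)
    (hds : ∀ e, cE e ∣ cV (s e)) (hdt : ∀ e, cE e ∣ cV (t e))
    (hconn : GraphConnected s t) :
    ((gogLap s t cV cE).map (Int.cast : ℤ → ℚ)).adjugate =
      ((∏ v : V, (cV v : ℚ)) *
        ∑ F ∈ Finset.univ.filter (fun F : Finset E => IsSpanningTree s t F),
          ∏ e ∈ F, ((cE e : ℚ))⁻¹) •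
      (Matrix.diagonal (fun v => ((cV v : ℚ))⁻¹) * Matrix.of (fun _ _ => (1 : ℚ))) := by
  have hw (e : E) : 0 < ((cE e : ℚ))⁻¹ := inv_pos.mpr (Nat.cast_pos.mpr (hcE e))
  rw [Multigraph.gogLap_map_intCast_eq_laplacian_mul_diagonal hds hdt, adjugate_mul_distrib,
    adjugate_diagonal, Multigraph.adjugate_laplacian hw hconn]
  ext u v
  have hu : (cV u : ℚ) ≠ 0 := Nat.cast_ne_zero.mpr (hcV u).ne'
  simp only [Matrix.smul_apply, diagonal_mul, of_apply, smul_eq_mul,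
    ← Finset.mul_prod_erase _ _ (Finset.mem_univ u)]
  field_simp
end

section
/- Let p : X̃ → X be the double cover given by a ℤ/2ℤ-action on a finite graph X̃, with free graph X_fr and parity assignment ε. Then the voltage Laplacian L₀ : ℤ^{V(X_fr)} → ℤ^{V(X_fr)} has matrix entries: L₀[u,u] = #(non-loop edges at u) + 4·#(odd loops at u) + 2·#(odd legs at u) + #(null legs at u), and for u ≠ v, L₀[u,v] = #(odd edges between u and v) − #(even edges between u and v). -/
open Finset

lemma even_card_invol {α : Type*} [DecidableEq α] (g : α → α) :
    ∀ S : Finset α, (∀ a ∈ S, g a ∈ S) → (∀ a ∈ S, g (g a) = a) → (∀ a ∈ S, g a ≠ a) →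
      Even S.card := by
  intro S
  induction S using Finset.strongInduction with
  | _ S ih =>
    intro h1 h2 h3
    rcases S.eq_empty_or_nonempty with rfl | ⟨a, ha⟩
    · simp
    · have hga := h1 a ha
      have hne := (h3 a ha).symm
      have hsubset : ({a, g a} : Finset α) ⊆ S := by
        intro x hx; simp at hx; rcases hx with rfl | rfl <;> assumption
      have hss : S \ {a, g a} ⊂ S := Finset.sdiff_ssubset hsubset (by simp)
      have heven := ih _ hss
        (by
          intro b hb
          simp only [Finset.mem_sdiff, Finset.mem_insert, Finset.mem_singleton] at hb ⊢
          obtain ⟨hbS, hb2⟩ := hb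
          push_neg at hb2
          refine ⟨h1 b hbS, ?_⟩
          rintro (hgb | hgb)
          · exact hb2.2 (by rw [← hgb, h2 b hbS])
          · have : g (g b) = g (g a) := by rw [hgb]
            rw [h2 b hbS, h2 a ha] at this
            exact hb2.1 this)
        (fun b hb => h2 b (Finset.mem_sdiff.mp hb).1)
        (fun b hb => h3 b (Finset.mem_sdiff.mp hb).1)
      have hcard2 : ({a, g a} : Finset α).card = 2 := by
        rw [Finset.card_insert_of_notMem (by simpa using hne), Finset.card_singleton]
      have hle : 2 ≤ S.card := hcard2 ▸ Finset.card_le_card hsubset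
      have hcard : S.card = (S \ {a, g a}).card + 2 := by
        rw [Finset.card_sdiff_of_subset hsubset, hcard2]; omega
      obtain ⟨k, hk⟩ := heven
      exact ⟨k + 1, by omega⟩

/-- the voltage Laplacian of a double cover, in terms of the free graph
`X_fr` with parity assignment `ε` (ε = 1 on even edges/legs, -1 on odd edges/legs, 0 on
null legs).  The voltage Laplacian is `L₀ = r ∘ (Id - ι_ε) ∘ τ`, where
`ι_ε(h) = ε(h)·ι(h)` is the parity-twisted involution; its matrix entries are:
on the diagonal, `#(non-loop edges at u) + 4·#(odd loops at u) + 2·#(odd legs at u) +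
#(null legs at u)` (an odd loop contributes its two half-edges, whence the `·/2`), and
off the diagonal, `#(odd edges between u and v) - #(even edges between u and v)`
(each edge between distinct `u ≠ v` is counted by its unique half-edge rooted at `v`). -/
theorem stmt15 {V H : Type*} [Fintype V] [Fintype H] [DecidableEq V] [DecidableEq H]
    (r : H → V) (ι : H → H) (hι : ∀ h, ι (ι h) = h)
    (ε : H → ℤ)
    (hει : ∀ h, ε (ι h) = ε h)
    (hεedge : ∀ h, ι h ≠ h → ε h = 1 ∨ ε h = -1)
    (hεleg : ∀ h, ι h = h → ε h = 1 ∨ ε h = -1 ∨ ε h = 0)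
    (L₀ : Matrix V V ℤ)
    (hL₀ : L₀ = Matrix.of fun u v => ∑ h : H,
      if r h = v then (if u = v then 1 else 0) - ε h * (if r (ι h) = u then 1 else 0)
      else 0) :
    (∀ u : V, L₀ u u =
        ((Finset.univ.filter (fun h => r h = u ∧ ι h ≠ h ∧ r (ι h) ≠ u)).card : ℤ) +
        4 * (((Finset.univ.filter
            (fun h => r h = u ∧ ι h ≠ h ∧ r (ι h) = u ∧ ε h = -1)).card / 2 : ℕ) : ℤ) +
        2 * ((Finset.univ.filter (fun h => r h = u ∧ ι h = h ∧ ε h = -1)).card : ℤ) +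
        ((Finset.univ.filter (fun h => r h = u ∧ ι h = h ∧ ε h = 0)).card : ℤ)) ∧
    (∀ u v : V, u ≠ v → L₀ u v =
        ((Finset.univ.filter (fun h => r h = v ∧ r (ι h) = u ∧ ε h = -1)).card : ℤ) -
        ((Finset.univ.filter (fun h => r h = v ∧ r (ι h) = u ∧ ε h = 1)).card : ℤ)) := by
  subst hL₀
  constructor
  · intro u
    -- evenness of the odd-loop set
    have heven : Even (Finset.univ.filter
        (fun h => r h = u ∧ ι h ≠ h ∧ r (ι h) = u ∧ ε h = -1)).card := by
      apply even_card_invol ι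
      · intro a ha
        simp only [Finset.mem_filter, Finset.mem_univ, true_and] at ha ⊢
        obtain ⟨h1, h2, h3, h4⟩ := ha
        exact ⟨h3, by rw [hι]; exact fun he => h2 he.symm, by rw [hι]; exact h1, by rw [hει]; exact h4⟩
      · intro a _; exact hι a
      · intro a ha
        simp only [Finset.mem_filter, Finset.mem_univ, true_and] at ha
        exact ha.2.1
    have key : ∀ h : H,
        (if r h = u then (if u = u then (1:ℤ) else 0) - ε h * (if r (ι h) = u then 1 else 0)
          else 0)
        = (if r h = u ∧ ι h ≠ h ∧ r (ι h) ≠ u then (1:ℤ) else 0)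
        + (if r h = u ∧ ι h ≠ h ∧ r (ι h) = u ∧ ε h = -1 then 2 else 0)
        + (if r h = u ∧ ι h = h ∧ ε h = -1 then 2 else 0)
        + (if r h = u ∧ ι h = h ∧ ε h = 0 then 1 else 0) := by
      intro h
      by_cases hr : r h = u
      · by_cases hl : ι h = h
        · have hriu : r (ι h) = u := by rw [hl]; exact hr
          rcases hεleg h hl with he | he | he <;> simp [hr, hl, hriu, he]
        · by_cases hriu : r (ι h) = u
          · rcases hεedge h hl with he | he <;> simp [hr, hl, hriu, he]
          · simp [hr, hl, hriu]
      · simp [hr]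
    rw [Matrix.of_apply]
    rw [Finset.sum_congr rfl (fun h _ => key h)]
    rw [Finset.sum_add_distrib, Finset.sum_add_distrib, Finset.sum_add_distrib]
    have sumc : ∀ (P : H → Prop) [DecidablePred P] (c : ℤ),
        (∑ x : H, if P x then c else 0) = c * ((Finset.univ.filter P).card : ℤ) := by
      intro P _ c
      rw [← Finset.sum_filter, Finset.sum_const, nsmul_eq_mul, mul_comm]
    rw [sumc, sumc, sumc, sumc]
    obtain ⟨k, hk⟩ := heven
    rw [hk]
    have h2 : (k + k) / 2 = k := by omega
    rw [h2]
    push_cast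
    ring
  · intro u v huv
    have key : ∀ h : H,
        (if r h = v then (if u = v then (1:ℤ) else 0) - ε h * (if r (ι h) = u then 1 else 0)
          else 0)
        = (if r h = v ∧ r (ι h) = u ∧ ε h = -1 then (1:ℤ) else 0)
        - (if r h = v ∧ r (ι h) = u ∧ ε h = 1 then 1 else 0) := by
      intro h
      by_cases hr : r h = v
      · by_cases hriu : r (ι h) = u
        · have hl : ι h ≠ h := by
            intro he; apply huv; rw [← hriu, he, hr]
          rcases hεedge h hl with he | he <;> simp [hr, hriu, he, huv]
        · simp [hr, hriu, huv]
      · simp [hr]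
    rw [Matrix.of_apply]
    rw [Finset.sum_congr rfl (fun h _ => key h)]
    have sumc : ∀ (P : H → Prop) [DecidablePred P] (c : ℤ),
        (∑ x : H, if P x then c else 0) = c * ((Finset.univ.filter P).card : ℤ) := by
      intro P _ c
      rw [← Finset.sum_filter, Finset.sum_const, nsmul_eq_mul, mul_comm]
    rw [Finset.sum_sub_distrib, sumc, sumc]
    ring
end

section
/- Let X̃ be a finite connected graph with a non-free ℤ/2ℤ-action and quotient p : X̃ → X, with free graph X_fr (allowing null legs) and twisted involution ι_fr(h) = ε(h)·ι_{X_fr}(h). Then the map r_fr∘(Id − ι_fr) : ℤ^{H(X_fr)} → ℤ^{V(X_fr)} is surjective. -/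
open Finset

/-- Connectivity of a graph presented by half-edges: root map `r` and involution `ι`. -/
def HalfConn {V H : Type*} (r : H → V) (ι : H → H) : Prop :=
  ∀ u v : V, Relation.ReflTransGen (fun a b => ∃ h, r h = a ∧ r (ι h) = b) u v

/-- A graph (with legs), given by half-edges, together with a `ℤ/2ℤ`-action, i.e. a pair
of involutions `σV, σH` commuting with the root map and the edge involution. -/
structure TwoCover (V H : Type*) where
  r : H → V
  ι : H → H
  ι_invol : ∀ h, ι (ι h) = h
  σV : V → V
  σH : H → H
  σV_invol : ∀ v, σV (σV v) = v
  σH_invol : ∀ h, σH (σH h) = h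
  σ_r : ∀ h, r (σH h) = σV (r h)
  σ_ι : ∀ h, ι (σH h) = σH (ι h)

/-- for a finite connected graph `X̃` with a non-free `ℤ/2ℤ`-action, the
map `r₀ ∘ (Id - ι₀) : H₀ → V₀` is surjective, where `V₀` (resp. `H₀`) consists of the
divisors on vertices (resp. half-edges) anti-invariant under the action — equivalently,
the map `r_fr ∘ (Id - ι_fr)` of the free graph `X_fr` with its parity-twisted involution
is surjective onto `ℤ^{V(X_fr)}`. -/
theorem stmt17 {V H : Type*} [Fintype V] [Fintype H] [DecidableEq V] [DecidableEq H]
    (C : TwoCover V H)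
    (hconn : HalfConn C.r C.ι)
    (hnonfree : (∃ v, C.σV v = v) ∨ (∃ h, C.σH h = h)) :
    ∀ d : V → ℤ, (∀ v, d (C.σV v) = - d v) →
      ∃ a : H → ℤ, (∀ h, a (C.σH h) = - a h) ∧
        ∀ v : V, (∑ h ∈ Finset.univ.filter (fun h => C.r h = v), (a h - a (C.ι h))) = d v := by
  classical
  set B : (H → ℤ) → V → ℤ :=
    fun a v => ∑ h ∈ Finset.univ.filter (fun h => C.r h = v), (a h - a (C.ι h)) with hBdef
  -- linearity
  have Badd : ∀ a b : H → ℤ, ∀ v, B (fun h => a h + b h) v = B a v + B b v := by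
    intro a b v
    simp only [hBdef]
    rw [← Finset.sum_add_distrib]
    apply Finset.sum_congr rfl
    intro h _; ring
  have Bsub : ∀ a b : H → ℤ, ∀ v, B (fun h => a h - b h) v = B a v - B b v := by
    intro a b v
    simp only [hBdef]
    rw [← Finset.sum_sub_distrib]
    apply Finset.sum_congr rfl
    intro h _; ring
  -- boundary of a delta function on a half-edge
  have Bdelta : ∀ h0 : H, ∀ v, B (fun h => if h = h0 then (1:ℤ) else 0) v =
      (if C.r h0 = v then (1:ℤ) else 0) - (if C.r (C.ι h0) = v then (1:ℤ) else 0) := by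
    intro h0 v
    simp only [hBdef]
    rw [Finset.sum_sub_distrib]
    congr 1
    · rw [Finset.sum_ite_eq' _ h0 (fun _ => (1:ℤ))]
      simp
    · have : ∀ h : H, (if C.ι h = h0 then (1:ℤ) else 0) = if h = C.ι h0 then (1:ℤ) else 0 := by
        intro h
        congr 1
        simp only [eq_iff_iff]
        constructor
        · intro he; rw [← he, C.ι_invol]
        · intro he; rw [he, C.ι_invol]
      simp only [this]
      rw [Finset.sum_ite_eq' _ (C.ι h0) (fun _ => (1:ℤ))]
      simp
  -- equivariance
  have Bsigma : ∀ a : H → ℤ, ∀ v, B (fun h => a (C.σH h)) v = B a (C.σV v) := by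
    intro a v
    simp only [hBdef]
    refine Finset.sum_nbij' C.σH C.σH ?_ ?_ ?_ ?_ ?_
    · intro h hh
      simp only [Finset.mem_filter, Finset.mem_univ, true_and] at *
      rw [C.σ_r, hh]
    · intro h hh
      simp only [Finset.mem_filter, Finset.mem_univ, true_and] at *
      rw [C.σ_r, hh, C.σV_invol]
    · intro h _; exact C.σH_invol h
    · intro h _; exact C.σH_invol h
    · intro h _
      rw [C.σ_ι]
  -- connectivity: difference of deltas on vertices is in the image
  have path : ∀ u w : V, ∃ b : H → ℤ, ∀ v, B b v =
      (if u = v then (1:ℤ) else 0) - (if w = v then (1:ℤ) else 0) := by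
    intro u w
    induction hconn u w with
    | refl => exact ⟨0, by intro v; simp [hBdef]⟩
    | tail _ hstep ih =>
      obtain ⟨b, hb⟩ := ih
      obtain ⟨h0, hr, hrι⟩ := hstep
      refine ⟨fun h => b h + (if h = h0 then (1:ℤ) else 0), ?_⟩
      intro v
      rw [Badd, hb, Bdelta, hr, hrι]
      ring
  -- there is a fixed vertex
  obtain ⟨v0, hv0⟩ : ∃ v0, C.σV v0 = v0 := by
    rcases hnonfree with ⟨v, hv⟩ | ⟨h, hh⟩
    · exact ⟨v, hv⟩
    · exact ⟨C.r h, by rw [← C.σ_r, hh]⟩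
  -- anti-invariant generators
  have gen : ∀ u : V, ∃ a : H → ℤ, (∀ h, a (C.σH h) = - a h) ∧ ∀ v, B a v =
      (if u = v then (1:ℤ) else 0) - (if C.σV u = v then (1:ℤ) else 0) := by
    intro u
    obtain ⟨b, hb⟩ := path u v0
    refine ⟨fun h => b h - b (C.σH h), ?_, ?_⟩
    · intro h
      simp only [C.σH_invol]
      ring
    · intro v
      rw [Bsub, Bsigma, hb, hb]
      have e1 : (if u = C.σV v then (1:ℤ) else 0) = if C.σV u = v then (1:ℤ) else 0 := by
        congr 1
        simp only [eq_iff_iff]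
        constructor
        · intro he; rw [he, C.σV_invol]
        · intro he; rw [← he, C.σV_invol]
      have e2 : (if v0 = C.σV v then (1:ℤ) else 0) = if v0 = v then (1:ℤ) else 0 := by
        congr 1
        simp only [eq_iff_iff]
        constructor
        · intro he
          have := congrArg C.σV he
          rwa [hv0, C.σV_invol] at this
        · intro he; rw [← he]; exact hv0.symm
      rw [e1, e2]
      ring
  -- main induction on the total mass of d
  have key : ∀ n : ℕ, ∀ d : V → ℤ, (∀ v, d (C.σV v) = - d v) →
      (∑ v, (d v).natAbs) = n →
      ∃ a : H → ℤ, (∀ h, a (C.σH h) = - a h) ∧ ∀ v, B a v = d v := by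
    intro n
    induction n using Nat.strong_induction_on with
    | _ n ih =>
      intro d hd hn
      by_cases hz : ∀ v, d v = 0
      · exact ⟨0, by simp, by intro v; simp [hBdef, hz v]⟩
      · push_neg at hz
        obtain ⟨v1, hv1⟩ := hz
        -- find u with d u > 0
        obtain ⟨u, hu⟩ : ∃ u, 0 < d u := by
          rcases lt_or_gt_of_ne hv1 with hlt | hgt
          · exact ⟨C.σV v1, by rw [hd]; omega⟩
          · exact ⟨v1, hgt⟩
        have hne : C.σV u ≠ u := by
          intro he
          have := hd u
          rw [he] at this
          omega
        set e : V → ℤ := fun w =>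
          d w - ((if u = w then (1:ℤ) else 0) - (if C.σV u = w then (1:ℤ) else 0)) with hedef
        have he_anti : ∀ v, e (C.σV v) = - e v := by
          intro v
          simp only [hedef]
          rw [hd]
          have e1 : (if u = C.σV v then (1:ℤ) else 0) = if C.σV u = v then (1:ℤ) else 0 := by
            congr 1
            simp only [eq_iff_iff]
            constructor
            · intro he; rw [he, C.σV_invol]
            · intro he; rw [← he, C.σV_invol]
          have e2 : (if C.σV u = C.σV v then (1:ℤ) else 0) = if u = v then (1:ℤ) else 0 := by
            congr 1
            simp only [eq_iff_iff]
            constructor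
            · intro he
              have := congrArg C.σV he
              rwa [C.σV_invol, C.σV_invol] at this
            · intro he; rw [he]
          rw [e1, e2]
          ring
        have hdu' : d (C.σV u) = - d u := hd u
        have heu : e u = d u - 1 := by
          simp [hedef, hne]
        have hlt : (∑ v, (e v).natAbs) < n := by
          rw [← hn]
          apply Finset.sum_lt_sum
          · intro w _
            by_cases h1 : u = w
            · subst h1; omega
            · by_cases h2 : C.σV u = w
              · have hew : e w = d w + 1 := by
                  simp only [hedef, if_neg h1, if_pos h2]; ring
                have hdw : d w = - d u := by rw [← h2, hd]
                omega
              · have hew : e w = d w := by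
                  simp only [hedef, if_neg h1, if_neg h2]; ring
                omega
          · exact ⟨u, Finset.mem_univ u, by omega⟩
        obtain ⟨a1, ha1anti, ha1⟩ := ih _ hlt e he_anti rfl
        obtain ⟨a2, ha2anti, ha2⟩ := gen u
        refine ⟨fun h => a1 h + a2 h, ?_, ?_⟩
        · intro h
          show a1 (C.σH h) + a2 (C.σH h) = -(a1 h + a2 h)
          rw [ha1anti, ha2anti]; ring
        · intro v
          rw [Badd, ha1, ha2]
          simp only [hedef]
          ring
  intro d hd
  obtain ⟨a, ha1, ha2⟩ := key (∑ v, (d v).natAbs) d hd rfl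
  exact ⟨a, ha1, ha2⟩
end
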